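/- Let k > 0, θ ∈ (−π/2, π/2), L > 0, α = k sin θ, and let u be given in the half-plane U_h = {x₂ > h} by the Rayleigh-type expansion u(x) = A_ι e^{iαx₁ − iβ₀x₂} + Σ_{n∈ℤ} A_n e^{iα_n x₁ + iβ_n x₂} with β₀ = k cos θ > 0, coefficients satisfying Σ|A_n e^{iβ_n(h−σ)}|² < ∞ for some σ > 0. If u ≡ 0 in U_h, then A_ι = 0. -/

import Mathlib

/-!
Put `x₁ = 0`: for every `t > h` the hypothesis reads `-Aι = ∑ₙ Aₙ e^{i(βₙ + β₀)t}`. Since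
`Re βₙ ≥ 0 < β₀`, no frequency `βₙ + β₀` vanishes, so the mean of each mode over `[t₀, t₀ + T]`
is `O(1/T)`. The modes are dominated for `t ≥ h` by `‖Aₙ‖ e^{-h Im βₙ}`, which is summable by
Cauchy–Schwarz against `e^{-σ Im βₙ}` (geometrically decaying in `|n|`, as
`Im βₙ ≥ |αₙ| - k`). Dominated convergence then shows that the mean of the constant `-Aι`
tends to `0`.
-/

open Real

/-- The Rayleigh lateral wavenumbers `α_n = α + 2nπ/L`. -/
noncomputable def alphaN (α L : ℝ) (n : ℤ) : ℝ := α + 2 * n * π / L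

/-- The Rayleigh vertical wavenumbers `β_n`. -/
noncomputable def betaN (k α L : ℝ) (n : ℤ) : ℂ :=
  if |alphaN α L n| ≤ k then ((Real.sqrt (k ^ 2 - (alphaN α L n) ^ 2) : ℝ) : ℂ)
  else Complex.I * ((Real.sqrt ((alphaN α L n) ^ 2 - k ^ 2) : ℝ) : ℂ)

open MeasureTheory Filter Topology Complex Interval

lemma tendsto_inv_mul_intervalIntegral_mul_exp_atTop {a c : ℂ} {B t₀ : ℝ} (hc : c ≠ 0)
    (hbound : ∀ t, t₀ ≤ t → ‖a * cexp (c * t)‖ ≤ B) :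
    Tendsto (fun T : ℝ => (T : ℂ)⁻¹ * ∫ t in t₀..t₀ + T, a * cexp (c * t)) atTop (𝓝 0) := by
  have hnorm : ∀ T : ℝ, 0 < T →
      ‖(T : ℂ)⁻¹ * ∫ t in t₀..t₀ + T, a * cexp (c * t)‖ ≤ 2 * B / ‖c‖ * T⁻¹ := by
    intro T hT
    rw [intervalIntegral.integral_const_mul, integral_exp_mul_complex hc, norm_mul, norm_inv,
      norm_real, norm_of_nonneg hT.le, mul_div_assoc', norm_div, mul_sub]
    have hdiff : ‖a * cexp (c * ↑(t₀ + T)) - a * cexp (c * t₀)‖ ≤ 2 * B := by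
      calc _ ≤ ‖a * cexp (c * ↑(t₀ + T))‖ + ‖a * cexp (c * t₀)‖ := norm_sub_le _ _
        _ ≤ B + B := add_le_add (hbound _ (by linarith)) (hbound _ le_rfl)
        _ = 2 * B := by ring
    rw [mul_comm]
    gcongr
  refine squeeze_zero_norm' ?_ (by simpa using tendsto_inv_atTop_zero.const_mul (2 * B / ‖c‖))
  filter_upwards [eventually_gt_atTop 0] with T hT using hnorm T hT

theorem eq_zero_of_tsum_mul_exp_eq_const {ι : Type*} [Countable ι] {a c : ι → ℂ} {B : ι → ℝ}
    {t₀ : ℝ} {g : ℂ} (hc : ∀ i, c i ≠ 0) (hB : Summable B)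
    (hbound : ∀ i t, t₀ ≤ t → ‖a i * cexp (c i * t)‖ ≤ B i)
    (hsum : ∀ t, t₀ ≤ t → ∑' i, a i * cexp (c i * t) = g) :
    g = 0 := by
  set F : ℝ → ι → ℂ := fun T i => (T : ℂ)⁻¹ * ∫ t in t₀..t₀ + T, a i * cexp (c i * t)
  have hI : ∀ T : ℝ, 0 < T → ∀ t ∈ Ι t₀ (t₀ + T), t₀ ≤ t := fun T hT t ht => by
    rw [Set.uIoc_of_le (by linarith)] at ht
    exact ht.1.le
  have hF_tsum : ∀ T : ℝ, 0 < T → ∑' i, F T i = g := by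
    intro T hT
    have hint : HasSum (fun i => ∫ t in t₀..t₀ + T, a i * cexp (c i * t))
        (∫ _ in t₀..t₀ + T, g) := by
      refine intervalIntegral.hasSum_integral_of_dominated_convergence (fun i _ => B i)
        (fun i => (Continuous.aestronglyMeasurable (by fun_prop)))
        (fun i => ae_of_all _ fun t ht => hbound i t (hI T hT t ht)) (ae_of_all _ fun _ _ => hB)
        intervalIntegrable_const (ae_of_all _ fun t ht => ?_)
      rw [← hsum t (hI T hT t ht)]
      exact (hB.of_norm_bounded fun i => hbound i t (hI T hT t ht)).hasSum
    rw [intervalIntegral.integral_const, add_sub_cancel_left] at hint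
    simp only [F]
    rw [tsum_mul_left, hint.tsum_eq, real_smul, inv_mul_cancel_left₀ (ofReal_ne_zero.2 hT.ne')]
  have hF_bound : ∀ T : ℝ, 0 < T → ∀ i, ‖F T i‖ ≤ B i := by
    intro T hT i
    have hle := intervalIntegral.norm_integral_le_of_norm_le_const
      fun t ht => hbound i t (hI T hT t ht)
    rw [add_sub_cancel_left, abs_of_pos hT] at hle
    simp only [F]
    rw [norm_mul, norm_inv, norm_real, norm_of_nonneg hT.le]
    calc T⁻¹ * _ ≤ T⁻¹ * (B i * T) := by gcongr
      _ = B i := by field_simp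
  have hlim := tendsto_tsum_of_dominated_convergence hB
    (fun i => tendsto_inv_mul_intervalIntegral_mul_exp_atTop (hc i) (hbound i))
    ((eventually_gt_atTop 0).mono hF_bound)
  rw [tsum_zero] at hlim
  exact tendsto_nhds_unique (tendsto_const_nhds.congr' <|
    (eventually_gt_atTop 0).mono fun T hT => (hF_tsum T hT).symm) hlim

lemma norm_exp_I_mul_mul_ofReal (z : ℂ) (t : ℝ) : ‖cexp (I * z * t)‖ = rexp (-(z.im * t)) := by
  rw [norm_exp]
  congr 1
  simp [mul_re, mul_im]

lemma summable_int_exp_neg_mul_abs {c : ℝ} (hc : 0 < c) :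
    Summable fun n : ℤ => rexp (-(c * |(n : ℝ)|)) := by
  have hnat : Summable fun n : ℕ => rexp (n * -c) := Real.summable_exp_nat_mul_iff.2 (by linarith)
  refine Summable.of_nat_of_neg ?_ ?_ <;>
    simpa [abs_of_nonneg, mul_comm] using hnat

lemma tsum_mul_exp_add_eq_neg {ι : Type*} {f z : ι → ℂ} {a w : ℂ}
    (h : a * cexp (-w) + ∑' i, f i * cexp (z i) = 0) :
    ∑' i, f i * cexp (z i + w) = -a := by
  simp_rw [Complex.exp_add, ← mul_assoc]
  rw [tsum_mul_right, eq_neg_of_add_eq_zero_right h, neg_mul, mul_assoc, ← Complex.exp_add,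
    neg_add_cancel, Complex.exp_zero, mul_one]

section Rayleigh

variable {k α L : ℝ}

lemma betaN_re_nonneg (n : ℤ) : 0 ≤ (betaN k α L n).re := by
  unfold betaN; split <;> simp [Real.sqrt_nonneg]

lemma betaN_im_nonneg (n : ℤ) : 0 ≤ (betaN k α L n).im := by
  unfold betaN; split <;> simp [Real.sqrt_nonneg]

lemma betaN_add_ofReal_ne_zero {β₀ : ℝ} (hβ₀ : 0 < β₀) (n : ℤ) : betaN k α L n + β₀ ≠ 0 := by
  intro h0
  have hre := congrArg re h0
  rw [add_re, ofReal_re, zero_re] at hre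
  linarith [betaN_re_nonneg (k := k) (α := α) (L := L) n]

lemma abs_alphaN_sub_le_betaN_im (hk : 0 ≤ k) (n : ℤ) :
    |alphaN α L n| - k ≤ (betaN k α L n).im := by
  unfold betaN
  split_ifs with hle
  · simpa using hle
  · push Not at hle
    have hsq : (|alphaN α L n| - k) ^ 2 ≤ alphaN α L n ^ 2 - k ^ 2 := by
      nlinarith [sq_abs (alphaN α L n)]
    simpa [Real.sqrt_sq (by linarith : 0 ≤ |alphaN α L n| - k)] using Real.sqrt_le_sqrt hsq

lemma mul_abs_sub_abs_le_abs_alphaN (hL : 0 < L) (n : ℤ) :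
    2 * π / L * |(n : ℝ)| - |α| ≤ |alphaN α L n| := by
  have h := abs_sub_abs_le_abs_sub (2 * n * π / L) (-α)
  rw [abs_neg, sub_neg_eq_add, add_comm, ← alphaN] at h
  have habs : |2 * (n : ℝ) * π / L| = 2 * π / L * |(n : ℝ)| := by
    rw [abs_div, abs_of_pos hL, abs_mul, abs_mul, abs_two, abs_of_pos pi_pos]
    ring
  linarith

lemma summable_exp_neg_mul_betaN_im (hk : 0 ≤ k) (hL : 0 < L) {s : ℝ} (hs : 0 < s) :
    Summable fun n => rexp (-(s * (betaN k α L n).im)) := by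
  refine ((summable_int_exp_neg_mul_abs (by positivity : 0 < s * (2 * π / L))).mul_left
    (rexp (s * (|α| + k)))).of_nonneg_of_le (fun _ => (exp_pos _).le) fun n => ?_
  rw [← Real.exp_add, exp_le_exp]
  have := abs_alphaN_sub_le_betaN_im (α := α) (L := L) hk n
  have := mul_abs_sub_abs_le_abs_alphaN (α := α) hL n
  nlinarith

lemma summable_norm_mul_exp_neg_betaN_im_mul (hk : 0 ≤ k) (hL : 0 < L) {A : ℤ → ℂ} {h σ : ℝ}
    (hσ : 0 < σ)
    (hsum : Summable fun n => ‖A n * cexp (I * betaN k α L n * ((h - σ : ℝ) : ℂ))‖ ^ 2) :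
    Summable fun n => ‖A n‖ * rexp (-((betaN k α L n).im * h)) := by
  have hexp : Summable fun n => rexp (-(σ * (betaN k α L n).im)) ^ 2 := by
    refine (summable_exp_neg_mul_betaN_im (α := α) hk hL (by positivity : 0 < 2 * σ)).congr
      fun n => ?_
    rw [← Real.exp_nat_mul]
    push_cast
    ring_nf
  refine (Real.summable_mul_of_Lp_Lq_of_nonneg Real.HolderConjugate.two_two
    (f := fun n => ‖A n * cexp (I * betaN k α L n * ((h - σ : ℝ) : ℂ))‖)
    (g := fun n => rexp (-(σ * (betaN k α L n).im)))
    (fun _ => norm_nonneg _) (fun _ => (exp_pos _).le) (by simpa only [Real.rpow_two] using hsum)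
    (by simpa only [Real.rpow_two] using hexp)).congr fun n => ?_
  rw [norm_mul, norm_exp_I_mul_mul_ofReal, mul_assoc, ← Real.exp_add]
  congr 2
  ring

end Rayleigh

theorem total_field_vanishing_implies_no_incidence (k θ L h σ : ℝ)
    (hk : 0 < k) (hθ : θ ∈ Set.Ioo (-(π / 2)) (π / 2)) (hL : 0 < L) (hσ : 0 < σ)
    (Aι : ℂ) (A : ℤ → ℂ)
    (hsum : Summable (fun n : ℤ =>
      ‖A n * Complex.exp (Complex.I * betaN k (k * Real.sin θ) L n * ((h - σ : ℝ) : ℂ))‖ ^ 2))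
    (hzero : ∀ x₁ x₂ : ℝ, h < x₂ →
      Aι * Complex.exp (Complex.I * ((k * Real.sin θ : ℝ) : ℂ) * (x₁ : ℂ)
          - Complex.I * ((k * Real.cos θ : ℝ) : ℂ) * (x₂ : ℂ))
        + ∑' n : ℤ, A n * Complex.exp (Complex.I * ((alphaN (k * Real.sin θ) L n : ℝ) : ℂ) * (x₁ : ℂ)
            + Complex.I * betaN k (k * Real.sin θ) L n * (x₂ : ℂ)) = 0) :
    Aι = 0 := by
  set β := betaN k (k * Real.sin θ) L
  set β₀ := k * Real.cos θ
  have hβ₀ : 0 < β₀ := mul_pos hk (cos_pos_of_mem_Ioo hθ)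
  have hfreq : ∀ n, I * (β n + β₀) ≠ 0 := fun n =>
    mul_ne_zero I_ne_zero (betaN_add_ofReal_ne_zero hβ₀ n)
  have henvelope : ∀ n, ∀ t : ℝ, h + 1 ≤ t →
      ‖A n * cexp (I * (β n + β₀) * t)‖ ≤ ‖A n‖ * rexp (-((β n).im * h)) := by
    intro n t ht
    rw [norm_mul, norm_exp_I_mul_mul_ofReal, add_im, ofReal_im, add_zero]
    gcongr
    · exact betaN_im_nonneg n
    · linarith
  have hincident : ∀ t : ℝ, h + 1 ≤ t → ∑' n, A n * cexp (I * (β n + β₀) * t) = -Aι := by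
    intro t ht
    have hfield := hzero 0 t (by linarith)
    simp only [ofReal_zero, mul_zero, zero_sub, zero_add] at hfield
    simp_rw [mul_add I, add_mul]
    exact tsum_mul_exp_add_eq_neg hfield
  exact neg_eq_zero.1 <| eq_zero_of_tsum_mul_exp_eq_const hfreq
    (summable_norm_mul_exp_neg_betaN_im_mul hk.le hL hσ hsum) henvelope hincident
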